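/- Let s, t, v₂, v₃ ∈ ℝ² with s ≠ t. Then there exist points w₂, w₃ ∈ ℝ² with dist(s, w₂) = dist(s, v₂), dist(w₂, w₃) = dist(v₂, v₃), dist(w₃, t) = dist(v₃, t), such that the quadrilateral with vertices s, w₂, w₃, t in this cyclic order is convex, in the sense that the four signed areas det(w₂ − s, w₃ − s), det(w₃ − w₂, t − w₂), det(t − w₃, s − w₃), det(s − t, w₂ − t) are either all nonnegative or all nonpositive. -/

import Mathlib

noncomputable section

/-- The Euclidean plane. -/
abbrev E2 := EuclideanSpace ℝ (Fin 2)

/-- The point of `ℝ²` with coordinates `x` and `y`. -/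
def pt (x y : ℝ) : E2 := (WithLp.equiv 2 (Fin 2 → ℝ)).symm ![x, y]

/-- `det(u, v) = u₁v₂ − u₂v₁` for `u, v ∈ ℝ²`. -/
def det2 (u v : E2) : ℝ := u 0 * v 1 - u 1 * v 0

/-!
Write `d = |st|`, `r₂ = |sv₂|`, `r = |v₂v₃|`, `r₃ = |v₃t|`; each of these is at most the sum of
the other three. Fold the chain into a triangle with one extra vertex on a side. If
`r + r₃ ≤ d + r₂`, take a triangle `s w₂ t` with sides `d, r₂, r + r₃` and put `w₃` on `w₂t`;
otherwise extend `ts` beyond `s` by `r₂` to `w₂` and take a triangle `w₂ w₃ t` with sides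
`d + r₂, r, r₃`. Such a degenerate quadrilateral is convex: each of its four signed areas is a
nonnegative multiple of the signed area of the triangle.
-/

open Metric

section NormedSpace

variable {E : Type*} [NormedAddCommGroup E] [NormedSpace ℝ E]

theorem exists_dist_eq_dist_eq (hE : 1 < Module.rank ℝ E) {x y : E} (hxy : x ≠ y) {b c : ℝ}
    (h₁ : |b - c| ≤ dist x y) (h₂ : dist x y ≤ b + c) :
    ∃ p, dist x p = b ∧ dist p y = c := by
  set d := dist x y
  have hd : 0 < d := dist_pos.2 hxy
  obtain ⟨hcb, hbc⟩ := abs_le.1 h₁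
  have hb : 0 ≤ b := by linarith
  set u : E := d⁻¹ • (y - x)
  have hu : ‖u‖ = 1 := by
    rw [norm_smul, ← dist_eq_norm', norm_inv, Real.norm_of_nonneg hd.le, inv_mul_cancel₀ hd.ne']
  have hy : y = x + d • u := by simp [u, smul_smul, hd.ne']
  -- intermediate value theorem on the sphere of radius `b` around `x`, where the distance to `y`
  -- runs from `|d - b|` to `d + b`
  have hnear : dist (x + b • u) y = |d - b| := by
    rw [hy, dist_add_left, dist_eq_norm, ← sub_smul, norm_smul, hu, mul_one, Real.norm_eq_abs,
      abs_sub_comm]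
  have hfar : dist (x - b • u) y = d + b := by
    rw [hy, sub_eq_add_neg, dist_add_left, dist_eq_norm, ← neg_smul, ← sub_smul, norm_smul, hu,
      mul_one, Real.norm_eq_abs, abs_of_nonpos (by linarith)]
    ring
  have hc : c ∈ Set.Icc |d - b| (d + b) := by
    constructor
    · exact abs_le.2 ⟨by linarith, by linarith⟩
    · linarith
  obtain ⟨p, hp, hpy⟩ := (isPreconnected_sphere hE x b).intermediate_value
    (a := x + b • u) (b := x - b • u) (f := fun p => dist p y)
    (by simp [norm_smul, hu, abs_of_nonneg hb])
    (by simp [norm_smul, hu, abs_of_nonneg hb]) (continuous_id.dist continuous_const).continuousOn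
    (by simpa only [hnear, hfar] using hc)
  exact ⟨p, by rw [dist_comm]; exact mem_sphere.1 hp, hpy⟩

theorem exists_chain_mem_segment_of_le (hE : 1 < Module.rank ℝ E) {s t : E} (hst : s ≠ t)
    {r₂ r r₃ : ℝ} (hr : 0 ≤ r) (hr₃ : 0 ≤ r₃) (h₁ : |r₂ - (r + r₃)| ≤ dist s t)
    (h₂ : dist s t ≤ r₂ + (r + r₃)) :
    ∃ w₂ w₃, dist s w₂ = r₂ ∧ dist w₂ w₃ = r ∧ dist w₃ t = r₃ ∧ w₃ ∈ segment ℝ w₂ t := by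
  obtain ⟨w₂, hsw₂, hw₂t⟩ := exists_dist_eq_dist_eq hE hst h₁ h₂
  set l := r / (r + r₃)
  have hl : l * (r + r₃) = r := div_mul_cancel_of_imp fun h => by linarith
  have hl₁ : l ≤ 1 := div_le_one_of_le₀ (by linarith) (by linarith)
  refine ⟨w₂, AffineMap.lineMap w₂ t l, hsw₂, ?_, ?_,
    lineMap_mem_segment ℝ w₂ t ⟨by positivity, hl₁⟩⟩
  · rw [dist_left_lineMap, hw₂t, Real.norm_of_nonneg (by positivity), hl]
  · rw [dist_lineMap_right, hw₂t, Real.norm_of_nonneg (by linarith)]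
    linarith

theorem exists_chain_mem_segment_of_lt (hE : 1 < Module.rank ℝ E) {s t : E} (hst : s ≠ t)
    {r₂ r r₃ : ℝ} (hr₂ : 0 ≤ r₂) (h₁ : |r - r₃| ≤ dist s t + r₂) (h₂ : dist s t + r₂ ≤ r + r₃) :
    ∃ w₂ w₃, dist s w₂ = r₂ ∧ dist w₂ w₃ = r ∧ dist w₃ t = r₃ ∧ s ∈ segment ℝ t w₂ := by
  have hd : 0 < dist s t := dist_pos.2 hst
  set w₂ := s + (r₂ / dist s t) • (s - t)
  have hsw₂ : dist s w₂ = r₂ := by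
    rw [dist_comm, dist_eq_norm, add_sub_cancel_left, norm_smul, ← dist_eq_norm,
      Real.norm_of_nonneg (by positivity), div_mul_cancel₀ _ hd.ne']
  have hs : s ∈ segment ℝ t w₂ := by
    rw [mem_segment_iff_sameRay, add_sub_cancel_left]
    exact SameRay.sameRay_nonneg_smul_right _ (by positivity)
  have hw₂t : dist w₂ t = dist s t + r₂ := by
    rw [dist_comm, ← dist_add_dist_of_mem_segment hs, dist_comm t, hsw₂]
  obtain ⟨w₃, hw₂w₃, hw₃t⟩ :=
    exists_dist_eq_dist_eq hE (dist_pos.1 (by linarith)) (hw₂t ▸ h₁) (hw₂t ▸ h₂)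
  exact ⟨w₂, w₃, hsw₂, hw₂w₃, hw₃t, hs⟩

theorem exists_folded_chain (hE : 1 < Module.rank ℝ E) {s t : E} (hst : s ≠ t) (v₂ v₃ : E) :
    ∃ w₂ w₃, dist s w₂ = dist s v₂ ∧ dist w₂ w₃ = dist v₂ v₃ ∧ dist w₃ t = dist v₃ t ∧
      (w₃ ∈ segment ℝ w₂ t ∨ s ∈ segment ℝ t w₂) := by
  have hd := dist_triangle4 s v₂ v₃ t
  have hr₂ := dist_triangle4 v₂ v₃ t s
  have hr := dist_triangle4 v₂ s t v₃
  have hr₃ := dist_triangle4 v₃ v₂ s t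
  rw [dist_comm v₂ s, dist_comm t s] at hr₂
  rw [dist_comm v₂ s, dist_comm t v₃] at hr
  rw [dist_comm v₃ v₂, dist_comm v₂ s] at hr₃
  rcases le_or_gt (dist v₂ v₃ + dist v₃ t) (dist s t + dist s v₂) with hle | hlt
  · obtain ⟨w₂, w₃, h₂, h, h₃, hw₃⟩ := exists_chain_mem_segment_of_le hE hst
      (r₂ := dist s v₂) (r := dist v₂ v₃) (r₃ := dist v₃ t) dist_nonneg dist_nonneg
      (abs_le.2 ⟨by linarith, by linarith⟩) (by linarith)
    exact ⟨w₂, w₃, h₂, h, h₃, .inl hw₃⟩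
  · obtain ⟨w₂, w₃, h₂, h, h₃, hs⟩ := exists_chain_mem_segment_of_lt hE hst
      (r := dist v₂ v₃) (r₃ := dist v₃ t) dist_nonneg (abs_le.2 ⟨by linarith, by linarith⟩) hlt.le
    exact ⟨w₂, w₃, h₂, h, h₃, .inr hs⟩

end NormedSpace

def IsConvexQuad (p₁ p₂ p₃ p₄ : E2) : Prop :=
  (0 ≤ det2 (p₂ - p₁) (p₃ - p₁) ∧ 0 ≤ det2 (p₃ - p₂) (p₄ - p₂) ∧
      0 ≤ det2 (p₄ - p₃) (p₁ - p₃) ∧ 0 ≤ det2 (p₁ - p₄) (p₂ - p₄)) ∨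
    (det2 (p₂ - p₁) (p₃ - p₁) ≤ 0 ∧ det2 (p₃ - p₂) (p₄ - p₂) ≤ 0 ∧
      det2 (p₄ - p₃) (p₁ - p₃) ≤ 0 ∧ det2 (p₁ - p₄) (p₂ - p₄) ≤ 0)

theorem IsConvexQuad.rotate {p₁ p₂ p₃ p₄ : E2} (h : IsConvexQuad p₁ p₂ p₃ p₄) :
    IsConvexQuad p₂ p₃ p₄ p₁ := by
  unfold IsConvexQuad at *
  tauto

theorem isConvexQuad_of_mem_segment {a b p : E2} (hp : p ∈ segment ℝ a b) (c : E2) :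
    IsConvexQuad c a p b := by
  obtain ⟨α, β, hα, hβ, hαβ, rfl⟩ := hp
  obtain rfl : α = 1 - β := by linarith
  set D := det2 (a - c) (b - c)
  have e₁ : det2 (a - c) ((1 - β) • a + β • b - c) = β * D := by
    simp only [det2, D, PiLp.sub_apply, PiLp.add_apply, PiLp.smul_apply, smul_eq_mul]; ring
  have e₂ : det2 ((1 - β) • a + β • b - a) (b - a) = 0 := by
    simp only [det2, PiLp.sub_apply, PiLp.add_apply, PiLp.smul_apply, smul_eq_mul]; ring
  have e₃ : det2 (b - ((1 - β) • a + β • b)) (c - ((1 - β) • a + β • b)) = (1 - β) * D := by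
    simp only [det2, D, PiLp.sub_apply, PiLp.add_apply, PiLp.smul_apply, smul_eq_mul]; ring
  have e₄ : det2 (c - b) (a - b) = D := by
    simp only [det2, D, PiLp.sub_apply]; ring
  unfold IsConvexQuad
  rw [e₁, e₂, e₃, e₄]
  rcases le_total 0 D with hD | hD
  · exact .inl ⟨mul_nonneg hβ hD, le_rfl, mul_nonneg hα hD, hD⟩
  · exact .inr ⟨mul_nonpos_of_nonneg_of_nonpos hβ hD, le_rfl,
      mul_nonpos_of_nonneg_of_nonpos hα hD, hD⟩

/-- Given `s ≠ t` and a (possibly self-crossing) three-edge chain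
`s, v₂, v₃, t`, the chain can be re-realized with the same edge lengths so that
`s, w₂, w₃, t` in this cyclic order forms a convex quadrilateral, in the sense that
the four signed areas all have the same (weak) sign. -/
theorem exists_convex_quadrilateral_configuration
    (s t v₂ v₃ : E2) (hst : s ≠ t) :
    ∃ w₂ w₃ : E2,
      dist s w₂ = dist s v₂ ∧ dist w₂ w₃ = dist v₂ v₃ ∧ dist w₃ t = dist v₃ t ∧
      ((0 ≤ det2 (w₂ - s) (w₃ - s) ∧ 0 ≤ det2 (w₃ - w₂) (t - w₂) ∧
        0 ≤ det2 (t - w₃) (s - w₃) ∧ 0 ≤ det2 (s - t) (w₂ - t)) ∨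
       (det2 (w₂ - s) (w₃ - s) ≤ 0 ∧ det2 (w₃ - w₂) (t - w₂) ≤ 0 ∧
        det2 (t - w₃) (s - w₃) ≤ 0 ∧ det2 (s - t) (w₂ - t) ≤ 0)) := by
  have hE : 1 < Module.rank ℝ E2 := by
    rw [← Module.finrank_eq_rank, finrank_euclideanSpace_fin]
    norm_num
  obtain ⟨w₂, w₃, h₂, h, h₃, hw₃ | hs⟩ := exists_folded_chain hE hst v₂ v₃
  · exact ⟨w₂, w₃, h₂, h, h₃, isConvexQuad_of_mem_segment hw₃ s⟩
  · exact ⟨w₂, w₃, h₂, h, h₃, (isConvexQuad_of_mem_segment hs w₃).rotate.rotate⟩
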